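/- Let f : E → ℝ be a lower semicontinuous function bounded below on a complete metric space (E,d). Given ε > 0, suppose u ∈ E satisfies f(u) ≤ inf f + ε. Then for any λ > 0 there exists v ∈ E such that f(v) ≤ f(u), d(u,v) ≤ λ, and for all w ≠ v, f(v) < f(w) + (ε/λ) d(w,v). -/
import Mathlib

open Set Filter Topology

/-- Ekeland's variational principle: on a complete metric space, given a lower
semicontinuous function `f` bounded below, `ε > 0`, and an `ε`-approximate minimizer `u`,
for any `λ > 0` there is `v` with `f v ≤ f u`, `dist u v ≤ λ`, and
`f v < f w + (ε/λ) * dist w v` for every `w ≠ v`. -/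
theorem ekeland_variational_principle {E : Type*} [MetricSpace E] [CompleteSpace E]
    (f : E → ℝ) (hf : LowerSemicontinuous f) (hb : BddBelow (Set.range f))
    (ε : ℝ) (hε : 0 < ε) (u : E) (hu : f u ≤ sInf (Set.range f) + ε)
    (lam : ℝ) (hlam : 0 < lam) :
    ∃ v : E, f v ≤ f u ∧ dist u v ≤ lam ∧
      ∀ w : E, w ≠ v → f v < f w + (ε / lam) * dist w v := by
  set α := ε / lam with hα
  have hαpos : 0 < α := div_pos hε hlam
  set S : E → Set E := fun x => {y | f y + α * dist y x ≤ f x} with hSdef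
  have hself : ∀ x, x ∈ S x := by intro x; simp [hSdef]
  have hsub : ∀ x y, y ∈ S x → S y ⊆ S x := by
    intro x y hy z hz
    simp only [hSdef, mem_setOf_eq] at *
    have h3 := dist_triangle z y x
    nlinarith
  have hne : ∀ x, (f '' S x).Nonempty := fun x => ⟨f x, x, hself x, rfl⟩
  have hbdd : ∀ x, BddBelow (f '' S x) := by
    obtain ⟨c, hc⟩ := hb
    intro x
    exact ⟨c, by rintro _ ⟨y, -, rfl⟩; exact hc ⟨y, rfl⟩⟩
  have hclosed : ∀ x, IsClosed (S x) := by
    intro x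
    have h1 : LowerSemicontinuous (fun y => f y + α * dist y x) :=
      hf.add ((continuous_const.mul (continuous_id.dist continuous_const)).lowerSemicontinuous)
    exact h1.isClosed_preimage (f x)
  have hex : ∀ (n : ℕ) (x : E), ∃ y, y ∈ S x ∧ f y ≤ sInf (f '' S x) + (1/2 : ℝ)^n := by
    intro n x
    obtain ⟨a, ⟨y, hy, rfl⟩, ha⟩ :=
      Real.lt_sInf_add_pos (hne x) (pow_pos one_half_pos n)
    exact ⟨y, hy, ha.le⟩
  choose g hg1 hg2 using hex
  set seq : ℕ → E := fun n => Nat.rec u (fun n x => g n x) n with hseq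
  have hseq0 : seq 0 = u := rfl
  have hstep : ∀ n, seq (n+1) ∈ S (seq n) := fun n => hg1 n (seq n)
  have hmono : ∀ n m, n ≤ m → S (seq m) ⊆ S (seq n) := by
    intro n m h
    induction h with
    | refl => exact fun z hz => hz
    | step h ih => exact fun z hz => ih (hsub _ _ (hstep _) hz)
  have hmem : ∀ n m, n ≤ m → seq m ∈ S (seq n) := fun n m h => hmono n m h (hself _)
  -- key estimate
  have hkey : ∀ n, ∀ z ∈ S (seq (n+1)), α * dist z (seq (n+1)) ≤ (1/2 : ℝ)^n := by
    intro n z hz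
    have hz' : z ∈ S (seq n) := hsub _ _ (hstep n) hz
    have h1 : sInf (f '' S (seq n)) ≤ f z := csInf_le (hbdd _) ⟨z, hz', rfl⟩
    have h2 := hg2 n (seq n)
    simp only [hSdef, mem_setOf_eq] at hz
    linarith
  -- Cauchy sequence
  have hcauchy : CauchySeq (fun n => seq (n+1)) := by
    apply cauchySeq_of_le_geometric (1/2 : ℝ) (1/α) (by norm_num)
    intro n
    have := hkey n _ (hstep (n+1))
    rw [dist_comm]
    rw [div_mul_eq_mul_div, le_div_iff₀ hαpos]
    linarith
  obtain ⟨v, hv⟩ := cauchySeq_tendsto_of_complete hcauchy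
  have hvmem : ∀ n, v ∈ S (seq n) := by
    intro n
    refine (hclosed (seq n)).mem_of_tendsto hv ?_
    filter_upwards [eventually_ge_atTop n] with m hm
    exact hmem n (m+1) (by omega)
  have hvu : v ∈ S u := by rw [← hseq0]; exact hvmem 0
  simp only [hSdef, mem_setOf_eq] at hvu
  have hdnn : (0:ℝ) ≤ dist v u := dist_nonneg
  have hfv_le : f v ≤ f u := by nlinarith
  have hinf_le : sInf (Set.range f) ≤ f v := csInf_le hb ⟨v, rfl⟩
  refine ⟨v, hfv_le, ?_, ?_⟩
  · -- dist u v ≤ lam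
    rw [dist_comm]
    have h1 : α * dist v u ≤ ε := by linarith
    rw [hα] at h1
    rw [div_mul_eq_mul_div, div_le_iff₀ hlam] at h1
    nlinarith
  · intro w hw
    by_contra hcon
    push_neg at hcon
    have hwv : w ∈ S v := by simpa [hSdef, mem_setOf_eq] using hcon
    have hb2 : ∀ n : ℕ, dist w v ≤ (2/α) * (1/2 : ℝ)^n := by
      intro n
      have h1 : w ∈ S (seq (n+1)) := hsub _ _ (hvmem (n+1)) hwv
      have h2 := hkey n w h1
      have h3 := hkey n v (hvmem (n+1))
      have h4 := dist_triangle w (seq (n+1)) v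
      have h5 : dist (seq (n+1)) v = dist v (seq (n+1)) := dist_comm _ _
      rw [div_mul_eq_mul_div, le_div_iff₀ hαpos]
      nlinarith
    have htend : Tendsto (fun n : ℕ => (2/α) * (1/2 : ℝ)^n) atTop (𝓝 0) := by
      have := tendsto_pow_atTop_nhds_zero_of_lt_one (by norm_num : (0:ℝ) ≤ 1/2)
        (by norm_num : (1/2:ℝ) < 1)
      simpa using this.const_mul (2/α)
    have hle0 : dist w v ≤ 0 := ge_of_tendsto htend (Eventually.of_forall hb2)
    exact hw (by rwa [← dist_le_zero])
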